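/- arXiv:2605.24280 — 2 statements merged into one kernel-verified Lean document; each statement's English description precedes it below -/
import Mathlib

section
/- Let D be a finite DAG with vertices partitioned into sources S, internal vertices I, and sinks T, with no edges from S directly to T. For every internal vertex v, OPT(D) ≥ |N⁻(v) in D_{I∖{v}}| · |N⁺(v) in D_{I∖{v}}|, where D_{I∖{v}} is the graph obtained from D by eliminating all internal vertices except v. That is, the Markowitz degree of v after all other internal vertices have been eliminated is a lower bound on the minimum total elimination cost of D. -/
set_option linter.unusedSectionVars false

variable {V : Type*} [DecidableEq V] [Fintype V]

/-- In-neighborhood of `v` in the edge set `E`. -/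
def inN (E : Finset (V × V)) (v : V) : Finset V :=
  (E.filter fun p => p.2 = v).image Prod.fst

/-- Out-neighborhood of `v` in the edge set `E`. -/
def outN (E : Finset (V × V)) (v : V) : Finset V :=
  (E.filter fun p => p.1 = v).image Prod.snd

/-- Elimination of vertex `v`: delete `v` and add an edge from every in-neighbor
to every out-neighbor of `v` (if not already present). -/
def elimv (E : Finset (V × V)) (v : V) : Finset (V × V) :=
  (E ∪ (inN E v) ×ˢ (outN E v)).filter fun p => p.1 ≠ v ∧ p.2 ≠ v

/-- Eliminate a sequence of vertices, in order. -/
def elimSeq (E : Finset (V × V)) (σ : List V) : Finset (V × V) :=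
  σ.foldl elimv E

/-- Markowitz degree of `v`: in-degree times out-degree. -/
def mark (E : Finset (V × V)) (v : V) : ℕ :=
  (inN E v).card * (outN E v).card

/-- Cost of an elimination sequence: sum of the Markowitz degrees at the
time of each elimination. -/
def cost (E : Finset (V × V)) : List V → ℕ
  | [] => 0
  | v :: σ => mark E v + cost (elimv E v) σ

/-- The directed graph with edge set `E` is acyclic. -/
def Acyclic (E : Finset (V × V)) : Prop :=
  ∀ v : V, ¬ Relation.TransGen (fun a b => (a, b) ∈ E) v v

/-- `E` is an acyclic digraph whose vertices are partitioned into sources `S`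
(no in-edges), internal vertices `I`, and sinks `T` (no out-edges). -/
def IsDAGPartition (E : Finset (V × V)) (S I T : Finset V) : Prop :=
  Acyclic E ∧ Disjoint S I ∧ Disjoint S T ∧ Disjoint I T ∧
    S ∪ I ∪ T = Finset.univ ∧ (∀ s ∈ S, inN E s = ∅) ∧ (∀ t ∈ T, outN E t = ∅)

/-- There is a directed path from `i` to `j` all of whose internal vertices
lie in `X` (the single-edge path has no internal vertices). -/
def PathThrough (E : Finset (V × V)) (X : Finset V) (i j : V) : Prop :=
  ∃ l : List V, (∀ v ∈ l, v ∈ X) ∧ List.Chain' (fun a b => (a, b) ∈ E) (i :: (l ++ [j]))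

/-! ### Auxiliary development -/

lemma mem_inN {E : Finset (V × V)} {v a : V} : a ∈ inN E v ↔ (a, v) ∈ E := by
  constructor
  · intro h
    simp only [inN, Finset.mem_image, Finset.mem_filter] at h
    obtain ⟨p, ⟨hp, h2⟩, h1⟩ := h
    have : p = (a, v) := by cases p; simp_all
    rwa [this] at hp
  · intro h
    simp only [inN, Finset.mem_image, Finset.mem_filter]
    exact ⟨(a, v), ⟨h, rfl⟩, rfl⟩

lemma mem_outN {E : Finset (V × V)} {v b : V} : b ∈ outN E v ↔ (v, b) ∈ E := by
  constructor
  · intro h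
    simp only [outN, Finset.mem_image, Finset.mem_filter] at h
    obtain ⟨p, ⟨hp, h2⟩, h1⟩ := h
    have : p = (v, b) := by cases p; simp_all
    rwa [this] at hp
  · intro h
    simp only [outN, Finset.mem_image, Finset.mem_filter]
    exact ⟨(v, b), ⟨h, rfl⟩, rfl⟩

lemma mem_elimv {E : Finset (V × V)} {w : V} {p : V × V} :
    p ∈ elimv E w ↔ p.1 ≠ w ∧ p.2 ≠ w ∧ (p ∈ E ∨ ((p.1, w) ∈ E ∧ (w, p.2) ∈ E)) := by
  simp only [elimv, Finset.mem_filter, Finset.mem_union, Finset.mem_product, mem_inN, mem_outN]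
  tauto

/-- Inductive path predicate: a path from `a` to `b` with internal vertices in `X`. -/
inductive PathP (E : Finset (V × V)) (X : Finset V) : V → V → Prop
  | single {a b : V} : (a, b) ∈ E → PathP E X a b
  | cons {a c b : V} : (a, c) ∈ E → c ∈ X → PathP E X c b → PathP E X a b

lemma PathP.mono {E : Finset (V × V)} {X Y : Finset V} (hXY : X ⊆ Y) {a b : V}
    (h : PathP E X a b) : PathP E Y a b := by
  induction h with
  | single h => exact .single h
  | cons h hc _ ih => exact .cons h (hXY hc) ih

lemma PathP.trans {E : Finset (V × V)} {X : Finset V} {a c b : V}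
    (h1 : PathP E X a c) : c ∈ X → PathP E X c b → PathP E X a b := by
  induction h1 with
  | single h => exact fun hc h2 => .cons h hc h2
  | cons h hm _ ih => exact fun hc h2 => .cons h hm (ih hc h2)

lemma PathP.transGen {E : Finset (V × V)} {X : Finset V} {a b : V}
    (h : PathP E X a b) : Relation.TransGen (fun x y => (x, y) ∈ E) a b := by
  induction h with
  | single h => exact Relation.TransGen.single h
  | cons h _ _ ih => exact Relation.TransGen.head h ih

lemma PathP.first_edge {E : Finset (V × V)} {X : Finset V} {a b : V}
    (h : PathP E X a b) : ∃ c, (a, c) ∈ E := by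
  cases h with
  | single h => exact ⟨b, h⟩
  | cons h _ _ => exact ⟨_, h⟩

lemma PathP.last_edge {E : Finset (V × V)} {X : Finset V} {a b : V}
    (h : PathP E X a b) : ∃ c, (c, b) ∈ E := by
  induction h with
  | single h => exact ⟨_, h⟩
  | cons _ _ _ ih => exact ih

/-- Key lemma: a path through `insert w X` induces a path through `X` after
eliminating `w`. Strengthened statement for the induction. -/
lemma PathP.elim_aux {E : Finset (V × V)} {w : V} {X : Finset V} {a b : V}
    (h : PathP E (insert w X) a b) :
    b ≠ w →
      (a ≠ w → PathP (elimv E w) X a b) ∧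
        (a = w → ∀ x, x ≠ w → (x, w) ∈ E → PathP (elimv E w) X x b) := by
  induction h with
  | @single a b h =>
    intro hb
    refine ⟨fun ha => .single (mem_elimv.mpr ⟨ha, hb, Or.inl h⟩), ?_⟩
    rintro rfl x hx hxw
    exact .single (mem_elimv.mpr ⟨hx, hb, Or.inr ⟨hxw, h⟩⟩)
  | @cons a c b h hc hp ih =>
    intro hb
    have ih := ih hb
    constructor
    · intro ha
      by_cases hcw : c = w
      · subst hcw
        exact ih.2 rfl a ha h
      · have hcX : c ∈ X := by
          rcases Finset.mem_insert.mp hc with h' | h'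
          · exact absurd h' hcw
          · exact h'
        exact .cons (mem_elimv.mpr ⟨ha, hcw, Or.inl h⟩) hcX (ih.1 hcw)
    · intro haw x hx hxw
      rw [haw] at h
      by_cases hcw : c = w
      · exact ih.2 hcw x hx hxw
      · have hcX : c ∈ X := by
          rcases Finset.mem_insert.mp hc with h' | h'
          · exact absurd h' hcw
          · exact h'
        exact .cons (mem_elimv.mpr ⟨hx, hcw, Or.inr ⟨hxw, h⟩⟩) hcX (ih.1 hcw)

lemma PathP.elim {E : Finset (V × V)} {w : V} {X : Finset V} {a b : V}
    (h : PathP E (insert w X) a b) (ha : a ≠ w) (hb : b ≠ w) :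
    PathP (elimv E w) X a b :=
  (h.elim_aux hb).1 ha

/-- Edges of the eliminated graph come from paths through `insert w X`. -/
lemma PathP.of_elimv {E : Finset (V × V)} {w : V} {X : Finset V} {a b : V}
    (h : PathP (elimv E w) X a b) : PathP E (insert w X) a b := by
  induction h with
  | @single a b h =>
    rcases mem_elimv.mp h with ⟨_, _, h' | ⟨h1, h2⟩⟩
    · exact .single h'
    · exact .cons h1 (Finset.mem_insert_self w X) (.single h2)
  | @cons a c b h hc _ ih =>
    rcases mem_elimv.mp h with ⟨_, _, h' | ⟨h1, h2⟩⟩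
    · exact .cons h' (Finset.mem_insert_of_mem hc) ih
    · exact .cons h1 (Finset.mem_insert_self w X) (.cons h2 (Finset.mem_insert_of_mem hc) ih)

/-- Edges of an eliminated sequence come from paths through the eliminated set. -/
lemma PathP.of_elimSeq {ρ : List V} : ∀ {E : Finset (V × V)} {a b : V},
    (a, b) ∈ elimSeq E ρ → PathP E ρ.toFinset a b := by
  induction ρ with
  | nil => exact fun h => .single h
  | cons w ρ' ih =>
    intro E a b h
    have h' : PathP (elimv E w) ρ'.toFinset a b := ih h
    have := h'.of_elimv
    simpa [List.toFinset_cons] using this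

/-- Eliminated vertices have no incident edges afterwards. -/
lemma elimv_avoid {E : Finset (V × V)} {w : V} {p : V × V} (h : p ∈ elimv E w) :
    p.1 ≠ w ∧ p.2 ≠ w :=
  ⟨(mem_elimv.mp h).1, (mem_elimv.mp h).2.1⟩

lemma elimv_avoid_pres {E : Finset (V × V)} {w u : V}
    (hE : ∀ p ∈ E, p.1 ≠ w ∧ p.2 ≠ w) :
    ∀ p ∈ elimv E u, p.1 ≠ w ∧ p.2 ≠ w := by
  intro p hp
  rcases mem_elimv.mp hp with ⟨_, _, h | ⟨h1, h2⟩⟩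
  · exact hE p h
  · exact ⟨(hE _ h1).1, (hE _ h2).2⟩

lemma elimSeq_avoid_pres {ρ : List V} : ∀ {E : Finset (V × V)} {w : V},
    (∀ p ∈ E, p.1 ≠ w ∧ p.2 ≠ w) → ∀ p ∈ elimSeq E ρ, p.1 ≠ w ∧ p.2 ≠ w := by
  induction ρ with
  | nil => exact fun hE => hE
  | cons u ρ' ih => exact fun hE => ih (elimv_avoid_pres hE)

lemma elimSeq_avoid {ρ : List V} : ∀ {E : Finset (V × V)} {w : V}, w ∈ ρ →
    ∀ p ∈ elimSeq E ρ, p.1 ≠ w ∧ p.2 ≠ w := by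
  induction ρ with
  | nil => simp
  | cons u ρ' ih =>
    intro E w hw
    rcases List.mem_cons.mp hw with rfl | hw'
    · exact elimSeq_avoid_pres (E := elimv E w) (fun q hq => elimv_avoid hq)
    · exact ih hw'

/-- Counting lemma: any set of "to-be-created" pairs is a lower bound on cost. -/
lemma card_le_cost : ∀ (σ : List V) (E : Finset (V × V)) (F : Finset (V × V)),
    (∀ p ∈ F, p ∉ E ∧ p.1 ∉ σ.toFinset ∧ p.2 ∉ σ.toFinset ∧ PathP E σ.toFinset p.1 p.2) →
    F.card ≤ cost E σ := by
  intro σ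
  induction σ with
  | nil =>
    intro E F hF
    have : F = ∅ := by
      rw [Finset.eq_empty_iff_forall_notMem]
      intro p hp
      obtain ⟨hpE, _, _, hpath⟩ := hF p hp
      cases hpath with
      | single h => exact hpE h
      | cons _ hc _ => simp at hc
    simp [this, cost]
  | cons w σ' ih =>
    intro E F hF
    rw [show cost E (w :: σ') = mark E w + cost (elimv E w) σ' from rfl]
    classical
    set F1 := F.filter (fun p => p ∈ elimv E w) with hF1
    set F2 := F.filter (fun p => p ∉ elimv E w) with hF2
    have hcard : F.card = F1.card + F2.card := (Finset.card_filter_add_card_filter_not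
      (fun p => p ∈ elimv E w)).symm
    have h1 : F1.card ≤ mark E w := by
      have hsub : F1 ⊆ (inN E w) ×ˢ (outN E w) := by
        intro p hp
        rw [hF1, Finset.mem_filter] at hp
        obtain ⟨hpF, hpe⟩ := hp
        obtain ⟨hpE, _, _, _⟩ := hF p hpF
        rcases mem_elimv.mp hpe with ⟨_, _, h | ⟨ha, hb⟩⟩
        · exact absurd h hpE
        · exact Finset.mem_product.mpr ⟨mem_inN.mpr ha, mem_outN.mpr hb⟩
      calc F1.card ≤ ((inN E w) ×ˢ (outN E w)).card := Finset.card_le_card hsub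
        _ = mark E w := by rw [Finset.card_product]; rfl
    have h2 : F2.card ≤ cost (elimv E w) σ' := by
      apply ih
      intro p hp
      rw [hF2, Finset.mem_filter] at hp
      obtain ⟨hpF, hpe⟩ := hp
      obtain ⟨hpE, h1', h2', hpath⟩ := hF p hpF
      simp only [List.toFinset_cons, Finset.mem_insert] at h1' h2'
      push_neg at h1' h2'
      refine ⟨hpe, h1'.2, h2'.2, ?_⟩
      have : PathP E (insert w σ'.toFinset) p.1 p.2 := by
        simpa [List.toFinset_cons] using hpath
      exact this.elim h1'.1 h2'.1
    omega

/-- with no source-to-sink edges, the Markowitz degree of an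
internal vertex `v` after eliminating all other internal vertices is a lower
bound on the cost of every total elimination sequence. -/
theorem markowitz_after_others_lower_bound (E : Finset (V × V)) (S I T : Finset V)
    (hD : IsDAGPartition E S I T)
    (hST : ∀ p ∈ E, ¬ (p.1 ∈ S ∧ p.2 ∈ T))
    (v : V) (hv : v ∈ I)
    (ρ : List V) (hρ : ρ.Nodup) (hρI : ρ.toFinset = I.erase v)
    (σ : List V) (hσ : σ.Nodup) (hσI : σ.toFinset = I) :
    mark (elimSeq E ρ) v ≤ cost E σ := by
  obtain ⟨hAc, hSI, hSTd, hIT, hUniv, hSrc, hSink⟩ := hD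
  set E' := elimSeq E ρ with hE'
  -- basic facts about in/out neighbors of v in E'
  have key : ∀ s ∈ inN E' v, ∀ t ∈ outN E' v,
      s ∈ S ∧ t ∈ T ∧ PathP E I s v ∧ PathP E I v t := by
    intro s hs t ht
    have hsv : (s, v) ∈ E' := mem_inN.mp hs
    have hvt : (v, t) ∈ E' := mem_outN.mp ht
    have hpsv : PathP E ρ.toFinset s v := PathP.of_elimSeq hsv
    have hpvt : PathP E ρ.toFinset v t := PathP.of_elimSeq hvt
    have hsvI : PathP E (I.erase v) s v := by rwa [hρI] at hpsv
    have hvtI : PathP E (I.erase v) v t := by rwa [hρI] at hpvt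
    have hsvI' : PathP E I s v := hsvI.mono (Finset.erase_subset v I)
    have hvtI' : PathP E I v t := hvtI.mono (Finset.erase_subset v I)
    -- s ≠ v
    have hsne : s ≠ v := by
      intro h
      rw [h] at hsvI'
      exact hAc v hsvI'.transGen
    have htne : t ≠ v := by
      intro h
      rw [h] at hvtI'
      exact hAc v hvtI'.transGen
    -- s, t not eliminated
    have hsρ : s ∉ ρ.toFinset := by
      intro hmem
      exact (elimSeq_avoid (List.mem_toFinset.mp hmem) (s, v) hsv).1 rfl
    have htρ : t ∉ ρ.toFinset := by
      intro hmem
      exact (elimSeq_avoid (List.mem_toFinset.mp hmem) (v, t) hvt).2 rfl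
    rw [hρI] at hsρ htρ
    have hsI : s ∉ I := fun h => hsρ (Finset.mem_erase.mpr ⟨hsne, h⟩)
    have htI : t ∉ I := fun h => htρ (Finset.mem_erase.mpr ⟨htne, h⟩)
    -- s has an out-edge in E, so s ∉ T
    have hsT : s ∉ T := by
      intro hT
      obtain ⟨c, hc⟩ := hsvI'.first_edge
      have : c ∈ outN E s := mem_outN.mpr hc
      rw [hSink s hT] at this
      simp at this
    -- t has an in-edge in E, so t ∉ S
    have htS : t ∉ S := by
      intro hS
      obtain ⟨c, hc⟩ := hvtI'.last_edge
      have : c ∈ inN E t := mem_inN.mpr hc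
      rw [hSrc t hS] at this
      simp at this
    have hsS : s ∈ S := by
      have : s ∈ S ∪ I ∪ T := hUniv ▸ Finset.mem_univ s
      simp only [Finset.mem_union] at this
      tauto
    have htT : t ∈ T := by
      have : t ∈ S ∪ I ∪ T := hUniv ▸ Finset.mem_univ t
      simp only [Finset.mem_union] at this
      tauto
    exact ⟨hsS, htT, hsvI', hvtI'⟩
  -- apply counting lemma with F = inN E' v ×ˢ outN E' v
  have hF : ∀ p ∈ (inN E' v) ×ˢ (outN E' v),
      p ∉ E ∧ p.1 ∉ σ.toFinset ∧ p.2 ∉ σ.toFinset ∧ PathP E σ.toFinset p.1 p.2 := by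
    intro p hp
    obtain ⟨hs, ht⟩ := Finset.mem_product.mp hp
    obtain ⟨hsS, htT, hpsv, hpvt⟩ := key p.1 hs p.2 ht
    refine ⟨fun hpE => hST p hpE ⟨hsS, htT⟩, ?_, ?_, ?_⟩
    · rw [hσI]; exact fun h => (Finset.disjoint_left.mp hSI) hsS h
    · rw [hσI]; exact fun h => (Finset.disjoint_left.mp hIT) h htT
    · rw [hσI]; exact hpsv.trans hv hpvt
  have := card_le_cost σ E ((inN E' v) ×ˢ (outN E' v)) hF
  rwa [Finset.card_product] at this
end

section
/- Let D be a finite DAG with vertices partitioned into sources S, internal vertices I, and sinks T, and let X ⊆ I. If u is a vertex not in X and every out-neighbor of u in D either lies outside X or has no directed path to some fixed vertex j avoiding vertices outside X, then membership of the edge (u,j) in D_X depends only on whether D has a directed path from u to j whose internal vertices all lie in X. In particular, if j is a sink not adjacent to u in D and no out-neighbor of u lies in X, then (u,j) is not an edge of D_X. -/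
/-!
Eliminating a vertex `v` turns every path `a → v → b` into an edge `a → b`, so for endpoints
other than `v` the paths of `elimv E v` with internal vertices in `Y` are exactly the paths of
`E` with internal vertices in `insert v Y`: expand each new edge back through `v`, and conversely
contract the path, bridging each visit to `v` by an edge from the vertex entering `v` to the one
leaving it. Iterating over the elimination sequence, `(u, j)` is an edge of `D_X` iff `D` has a
path from `u` to `j` through `X`, and such a path is a single edge unless its first step enters `X`.
-/

variable {V : Type*} [DecidableEq V] [Fintype V]

section PathThrough

variable {α : Type*} {E : Finset (α × α)} {X : Finset α} {i j : α}

theorem pathThrough_iff : PathThrough E X i j ↔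
    ∃ l : List α, (∀ v ∈ l, v ∈ X) ∧ List.IsChain (fun a b => (a, b) ∈ E) (i :: (l ++ [j])) :=
  Iff.rfl

theorem PathThrough.of_mem (h : (i, j) ∈ E) : PathThrough E X i j :=
  pathThrough_iff.mpr ⟨[], by simp, by simpa using h⟩

theorem PathThrough.cons {w : α} (h : (i, w) ∈ E) (hw : w ∈ X) (hwj : PathThrough E X w j) :
    PathThrough E X i j := by
  obtain ⟨l, hl, hc⟩ := pathThrough_iff.mp hwj
  refine pathThrough_iff.mpr ⟨w :: l, by simpa [hw] using hl, ?_⟩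
  rw [List.cons_append, List.isChain_cons_cons]
  exact ⟨h, hc⟩

@[elab_as_elim]
theorem PathThrough.induction_on {motive : α → Prop} (h : PathThrough E X i j)
    (edge : ∀ a, (a, j) ∈ E → motive a)
    (cons : ∀ a w, (a, w) ∈ E → w ∈ X → motive w → motive a) : motive i := by
  obtain ⟨l, hl, hc⟩ := pathThrough_iff.mp h
  clear h
  induction l generalizing i with
  | nil => exact edge i (by simpa using hc)
  | cons w l ih =>
    rw [List.cons_append, List.isChain_cons_cons] at hc
    exact cons i w hc.1 (hl w List.mem_cons_self)
      (ih (fun x hx => hl x (List.mem_cons_of_mem w hx)) hc.2)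

theorem PathThrough.trans {k : α} (hij : PathThrough E X i j) (hj : j ∈ X)
    (hjk : PathThrough E X j k) : PathThrough E X i k :=
  hij.induction_on (fun _ h => .cons h hj hjk) (fun _ _ h hw ih => .cons h hw ih)

theorem pathThrough_empty_iff : PathThrough E ∅ i j ↔ (i, j) ∈ E :=
  ⟨fun h => h.induction_on (motive := fun a => (a, j) ∈ E) (fun _ => id)
    (fun _ _ _ hw _ => absurd hw (Finset.notMem_empty _)), .of_mem⟩

theorem PathThrough.mem_of_forall_notMem (h : PathThrough E X i j)
    (hi : ∀ w, (i, w) ∈ E → w ∉ X) : (i, j) ∈ E := by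
  obtain ⟨_ | ⟨w, l⟩, hl, hc⟩ := pathThrough_iff.mp h
  · simpa using hc
  · rw [List.cons_append, List.isChain_cons_cons] at hc
    exact absurd (hl w List.mem_cons_self) (hi w hc.1)

end PathThrough

section Elimination

variable {α : Type*} [DecidableEq α] {E : Finset (α × α)} {Y : Finset α} {v i j : α}

theorem mem_elimv_s16 :
    (i, j) ∈ elimv E v ↔ i ≠ v ∧ j ≠ v ∧ ((i, j) ∈ E ∨ (i, v) ∈ E ∧ (v, j) ∈ E) := by
  simp only [elimv, inN, outN, Finset.mem_filter, Finset.mem_union, Finset.mem_product,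
    Finset.mem_image, Prod.exists, exists_and_right, exists_eq_right]
  tauto

theorem PathThrough.insert_of_mem_elimv (h : (i, j) ∈ elimv E v) :
    PathThrough E (insert v Y) i j := by
  obtain ⟨-, -, hij | ⟨hiv, hvj⟩⟩ := mem_elimv_s16.mp h
  · exact .of_mem hij
  · exact .cons hiv (Finset.mem_insert_self v Y) (.of_mem hvj)

theorem PathThrough.insert_of_elimv (h : PathThrough (elimv E v) Y i j) :
    PathThrough E (insert v Y) i j :=
  h.induction_on (fun _ h => .insert_of_mem_elimv h)
    fun _ _ h hw ih => (PathThrough.insert_of_mem_elimv h).trans (Finset.mem_insert_of_mem hw) ih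

theorem PathThrough.elimv_of_insert (h : PathThrough E (insert v Y) i j) (hi : i ≠ v)
    (hj : j ≠ v) : PathThrough (elimv E v) Y i j := by
  -- A path leaving `v` is picked up, after elimination, by every in-neighbour of `v`.
  have key : (i ≠ v → PathThrough (elimv E v) Y i j) ∧
      (i = v → ∀ a ≠ v, (a, v) ∈ E → PathThrough (elimv E v) Y a j) := by
    refine h.induction_on ?_ ?_
    · intro i hij
      refine ⟨fun hi => .of_mem (mem_elimv_s16.mpr ⟨hi, hj, .inl hij⟩), ?_⟩
      rintro rfl a ha hav
      exact .of_mem (mem_elimv_s16.mpr ⟨ha, hj, .inr ⟨hav, hij⟩⟩)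
    · intro i w hiw hw ⟨ihw, ihv⟩
      rcases eq_or_ne w v with rfl | hwv
      · exact ⟨fun hi => ihv rfl i hi hiw, fun _ => ihv rfl⟩
      have hwY : w ∈ Y := (Finset.mem_insert.mp hw).resolve_left hwv
      refine ⟨fun hi => .cons (mem_elimv_s16.mpr ⟨hi, hwv, .inl hiw⟩) hwY (ihw hwv), ?_⟩
      rintro rfl a ha hav
      exact .cons (mem_elimv_s16.mpr ⟨ha, hwv, .inr ⟨hav, hiw⟩⟩) hwY (ihw hwv)
  exact key.1 hi

theorem pathThrough_elimv_iff (hi : i ≠ v) (hj : j ≠ v) :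
    PathThrough (elimv E v) Y i j ↔ PathThrough E (insert v Y) i j :=
  ⟨.insert_of_elimv, (·.elimv_of_insert hi hj)⟩

theorem mem_elimSeq_iff_pathThrough {σ : List α} (hi : i ∉ σ) (hj : j ∉ σ) :
    (i, j) ∈ elimSeq E σ ↔ PathThrough E σ.toFinset i j := by
  induction σ generalizing E with
  | nil => simp [elimSeq, pathThrough_empty_iff]
  | cons v σ ih =>
    rw [List.mem_cons, not_or] at hi hj
    rw [List.toFinset_cons, ← pathThrough_elimv_iff hi.1 hj.1]
    exact ih hi.2 hj.2

end Elimination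

theorem elimSeq_edge_local_criterion_general (E : Finset (V × V)) (X : Finset V) (u j : V)
    (hu : u ∉ X) (hj : j ∉ X) (σ : List V) (hσX : σ.toFinset = X) :
    ((u, j) ∈ elimSeq E σ ↔ PathThrough E X u j) ∧
    (outN E j = ∅ → (u, j) ∉ E → (∀ w : V, (u, w) ∈ E → w ∉ X) →
      (u, j) ∉ elimSeq E σ) := by
  subst hσX
  have hiff : (u, j) ∈ elimSeq E σ ↔ PathThrough E σ.toFinset u j :=
    mem_elimSeq_iff_pathThrough (mt List.mem_toFinset.mpr hu) (mt List.mem_toFinset.mpr hj)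
  exact ⟨hiff, fun _ huj hout h => huj ((hiff.mp h).mem_of_forall_notMem hout)⟩

/-- if `u ∉ X` and every out-neighbor of `u` either lies outside
`X` or has no directed path to `j` staying within `X`, then `(u,j) ∈ D_X` iff
`D` has a directed path from `u` to `j` with internal vertices in `X`.
In particular, if `j` is a sink not adjacent to `u` and no out-neighbor of `u`
lies in `X`, then `(u,j)` is not an edge of `D_X`. -/
theorem elimSeq_edge_local_criterion (E : Finset (V × V)) (S I T : Finset V)
    (hD : IsDAGPartition E S I T) (X : Finset V) (hX : X ⊆ I)
    (u j : V) (hu : u ∉ X) (hj : j ∉ X)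
    (σ : List V) (hσ : σ.Nodup) (hσX : σ.toFinset = X)
    (hmain : ∀ w : V, (u, w) ∈ E → w ∉ X ∨ ¬ PathThrough E X w j) :
    ((u, j) ∈ elimSeq E σ ↔ PathThrough E X u j) ∧
    (outN E j = ∅ → (u, j) ∉ E → (∀ w : V, (u, w) ∈ E → w ∉ X) →
      (u, j) ∉ elimSeq E σ) :=
  elimSeq_edge_local_criterion_general E X u j hu hj σ hσX
end
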